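/- arXiv:1711.08007 — 4 statements merged into one kernel-verified Lean document; each statement's English description precedes it below -/
import Mathlib

section
/- Let N ≥ 1 be a natural number and let G > 0, γ > 0, Δ > 0 and e > 0 be real numbers with e + N·Δ ≤ π/2. Then ∑_{j=−N}^{N} j · 10^{(G · (cos(e + j·Δ))²)/γ} < 0. -/
/-- For positive pointing error e (with the whole scan inside [−π/2, π/2]),
the WCA drift numerator is strictly negative. -/
theorem wca_drift_neg_of_pos_error (N : ℕ) (hN : 1 ≤ N) (G γ Δ e : ℝ)
    (hG : 0 < G) (hγ : 0 < γ) (hΔ : 0 < Δ) (he : 0 < e)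
    (hrange : e + (N : ℝ) * Δ ≤ Real.pi / 2) :
    ∑ j ∈ Finset.Icc (-(N : ℤ)) N,
      (j : ℝ) * (10 : ℝ) ^ ((G * Real.cos (e + (j : ℝ) * Δ) ^ 2) / γ) < 0 := by
  set f : ℤ → ℝ :=
    fun j => (j : ℝ) * (10 : ℝ) ^ ((G * Real.cos (e + (j : ℝ) * Δ) ^ 2) / γ) with hf
  have hN0 : (0:ℤ) < N := by exact_mod_cast hN
  -- key pairing inequality
  have key : ∀ j ∈ Finset.Icc (1:ℤ) (N:ℤ), f (-j) + f j < 0 := by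
    intro j hj
    rw [Finset.mem_Icc] at hj
    obtain ⟨hj1, hjN⟩ := hj
    have hjR : (1:ℝ) ≤ (j:ℝ) := by exact_mod_cast hj1
    have hjNR : (j:ℝ) ≤ (N:ℝ) := by exact_mod_cast hjN
    set a := e + (j:ℝ) * Δ with ha
    set b := e - (j:ℝ) * Δ with hb
    have hjΔ : 0 < (j:ℝ) * Δ := by nlinarith
    have hjΔN : (j:ℝ) * Δ ≤ (N:ℝ) * Δ := by nlinarith
    have haU : a ≤ Real.pi / 2 := by rw [ha]; linarith
    have haL : 0 < a := by rw [ha]; linarith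
    have habs : |b| < a := by
      rw [abs_lt]; constructor <;> [skip; skip] <;> simp only [ha, hb] <;> linarith
    have hcos : Real.cos a < Real.cos b := by
      have := Real.cos_lt_cos_of_nonneg_of_le_pi (abs_nonneg b)
        (by linarith [Real.pi_pos] : a ≤ Real.pi) habs
      rwa [Real.cos_abs] at this
    have hcosa : 0 ≤ Real.cos a := Real.cos_nonneg_of_mem_Icc
      ⟨by linarith [Real.pi_pos], haU⟩
    have hsq : Real.cos a ^ 2 < Real.cos b ^ 2 := by nlinarith
    have hexp : G * Real.cos a ^ 2 / γ < G * Real.cos b ^ 2 / γ := by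
      apply div_lt_div_of_pos_right _ hγ
      exact (mul_lt_mul_iff_right₀ hG).2 hsq
    have hpow : (10:ℝ) ^ (G * Real.cos a ^ 2 / γ) < (10:ℝ) ^ (G * Real.cos b ^ 2 / γ) :=
      Real.rpow_lt_rpow_left_iff (by norm_num : (1:ℝ) < 10) |>.2 hexp
    have hneg' : e + -((j:ℝ) * Δ) = b := by rw [hb]; ring
    simp only [hf, Int.cast_neg, neg_mul]
    rw [hneg']
    nlinarith [hpow, Real.rpow_pos_of_pos (by norm_num : (0:ℝ) < 10) (G * Real.cos b ^ 2 / γ)]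
  -- split the symmetric sum
  have hIcc : Finset.Icc (-(N:ℤ)) (N:ℤ) = Finset.Ico (-(N:ℤ)) ((N:ℤ)+1) := by
    ext x; simp only [Finset.mem_Icc, Finset.mem_Ico]; omega
  have hsplit1 : ∑ j ∈ Finset.Ico (-(N:ℤ)) 0, f j + ∑ j ∈ Finset.Ico (0:ℤ) ((N:ℤ)+1), f j
      = ∑ j ∈ Finset.Ico (-(N:ℤ)) ((N:ℤ)+1), f j :=
 by
    rw [← Finset.sum_union (Finset.Ico_disjoint_Ico_consecutive (-(N:ℤ)) 0 ((N:ℤ)+1)),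
      Finset.Ico_union_Ico_eq_Ico (show -(N:ℤ) ≤ 0 by omega) (show (0:ℤ) ≤ (N:ℤ)+1 by omega)]
  have hsplit2 : ∑ j ∈ Finset.Ico (0:ℤ) 1, f j + ∑ j ∈ Finset.Ico (1:ℤ) ((N:ℤ)+1), f j
      = ∑ j ∈ Finset.Ico (0:ℤ) ((N:ℤ)+1), f j :=
 by
    rw [← Finset.sum_union (Finset.Ico_disjoint_Ico_consecutive (0:ℤ) 1 ((N:ℤ)+1)),
      Finset.Ico_union_Ico_eq_Ico (show (0:ℤ) ≤ 1 by omega) (show (1:ℤ) ≤ (N:ℤ)+1 by omega)]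
  have h0 : ∑ j ∈ Finset.Ico (0:ℤ) 1, f j = 0 := by
    have : Finset.Ico (0:ℤ) 1 = {0} := rfl
    simp [this, hf]
  have hneg_sum : ∑ j ∈ Finset.Ico (-(N:ℤ)) 0, f j
      = ∑ j ∈ Finset.Icc (1:ℤ) (N:ℤ), f (-j) := by
    refine Finset.sum_nbij' (fun j => -j) (fun j => -j) ?_ ?_ ?_ ?_ ?_
    · intro j hj; rw [Finset.mem_Ico] at hj; rw [Finset.mem_Icc]; omega
    · intro j hj; rw [Finset.mem_Icc] at hj; rw [Finset.mem_Ico]; omega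
    · intro j _; ring
    · intro j _; ring
    · intro j _; simp
  have hIco1 : Finset.Ico (1:ℤ) ((N:ℤ)+1) = Finset.Icc (1:ℤ) (N:ℤ) := by
    ext x; simp only [Finset.mem_Icc, Finset.mem_Ico]; omega
  have htotal : ∑ j ∈ Finset.Icc (-(N:ℤ)) (N:ℤ), f j
      = ∑ j ∈ Finset.Icc (1:ℤ) (N:ℤ), (f (-j) + f j) := by
    rw [hIcc, ← hsplit1, ← hsplit2, h0, hneg_sum, hIco1, Finset.sum_add_distrib]
    ring
  calc ∑ j ∈ Finset.Icc (-(N:ℤ)) (N:ℤ), f j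
      = ∑ j ∈ Finset.Icc (1:ℤ) (N:ℤ), (f (-j) + f j) := htotal
    _ < ∑ j ∈ Finset.Icc (1:ℤ) (N:ℤ), 0 := by
        apply Finset.sum_lt_sum_of_nonempty
        · exact Finset.nonempty_Icc.2 (by exact_mod_cast hN)
        · exact key
    _ = 0 := by simp
end

section
/- Let N ≥ 1 be a natural number and let G > 0, γ > 0, Δ > 0 be real numbers and e < 0 a real number with −e + N·Δ ≤ π/2. Then ∑_{j=−N}^{N} j · 10^{(G · (cos(e + j·Δ))²)/γ} > 0. -/
lemma wca_key_lemma (G γ e t : ℝ) (hG : 0 < G) (hγ : 0 < γ) (he : e < 0) (ht : 0 < t)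
    (h : -e + t ≤ Real.pi / 2) :
    (10 : ℝ) ^ ((G * Real.cos (e - t) ^ 2) / γ) <
      (10 : ℝ) ^ ((G * Real.cos (e + t) ^ 2) / γ) := by
  have hpi := Real.pi_pos
  have hb : t - e ≤ Real.pi / 2 := by linarith
  have habs : |e + t| < t - e := abs_lt.mpr ⟨by linarith, by linarith⟩
  have h1 : Real.cos (t - e) < Real.cos |e + t| :=
    Real.cos_lt_cos_of_nonneg_of_le_pi (abs_nonneg _) (by linarith) habs
  have h2 : 0 ≤ Real.cos (t - e) :=
    Real.cos_nonneg_of_mem_Icc ⟨by linarith, hb⟩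
  have h3 : Real.cos (t - e) ^ 2 < Real.cos (e + t) ^ 2 := by
    have := pow_lt_pow_left₀ h1 h2 (n := 2) (by norm_num)
    rwa [Real.cos_abs] at this
  have h4 : Real.cos (e - t) ^ 2 = Real.cos (t - e) ^ 2 := by
    rw [show e - t = -(t - e) by ring, Real.cos_neg]
  have h5 : (G * Real.cos (e - t) ^ 2) / γ < (G * Real.cos (e + t) ^ 2) / γ := by
    rw [h4, div_lt_div_iff₀ hγ hγ]
    nlinarith [mul_lt_mul_of_pos_left h3 hG, mul_pos hG hγ, hγ]
  exact Real.rpow_lt_rpow_left_iff (by norm_num : (1:ℝ) < 10) |>.mpr h5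

/-- For negative pointing error e (with the whole scan inside [−π/2, π/2]),
the WCA drift numerator is strictly positive. -/
theorem wca_drift_pos_of_neg_error (N : ℕ) (hN : 1 ≤ N) (G γ Δ e : ℝ)
    (hG : 0 < G) (hγ : 0 < γ) (hΔ : 0 < Δ) (he : e < 0)
    (hrange : -e + (N : ℝ) * Δ ≤ Real.pi / 2) :
    0 < ∑ j ∈ Finset.Icc (-(N : ℤ)) N,
      (j : ℝ) * (10 : ℝ) ^ ((G * Real.cos (e + (j : ℝ) * Δ) ^ 2) / γ) := by
  set f : ℤ → ℝ := fun j => (j : ℝ) * (10 : ℝ) ^ ((G * Real.cos (e + (j : ℝ) * Δ) ^ 2) / γ)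
    with hf
  have key : ∀ t : ℝ, 0 < t → t ≤ (N : ℝ) * Δ →
      (10 : ℝ) ^ ((G * Real.cos (e - t) ^ 2) / γ) <
        (10 : ℝ) ^ ((G * Real.cos (e + t) ^ 2) / γ) := fun t ht htN =>
    wca_key_lemma G γ e t hG hγ he ht (by linarith)
  have hsum_neg : ∑ j ∈ Finset.Icc (-(N : ℤ)) N, f j
      = ∑ j ∈ Finset.Icc (-(N : ℤ)) N, f (-j) := by
    apply Finset.sum_equiv (Equiv.neg ℤ)
    · intro i; simp [Finset.mem_Icc]; omega
    · intro i _; simp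
  have hpair : ∀ j ∈ Finset.Icc (-(N : ℤ)) N, 0 ≤ f j + f (-j) := by
    intro j hj
    rw [Finset.mem_Icc] at hj
    have hfneg : ∀ k : ℤ, f (-k) = -(k : ℝ) * (10 : ℝ) ^ ((G * Real.cos (e - (k : ℝ) * Δ) ^ 2) / γ) := by
      intro k
      simp only [hf]
      push_cast
      ring_nf
    rcases lt_trichotomy j 0 with hj0 | hj0 | hj0
    · have hk : (0:ℝ) < -(j : ℝ) * Δ := by
        have : (j:ℝ) < 0 := by exact_mod_cast hj0
        nlinarith
      have hkN : -(j : ℝ) * Δ ≤ (N : ℝ) * Δ := by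
        have : -(j:ℝ) ≤ (N:ℝ) := by exact_mod_cast (by omega : -j ≤ (N:ℤ))
        nlinarith
      have := key (-(j:ℝ) * Δ) hk hkN
      have heq1 : e - -(j:ℝ) * Δ = e + (j:ℝ) * Δ := by ring
      have heq2 : e + -(j:ℝ) * Δ = e - (j:ℝ) * Δ := by ring
      rw [heq1, heq2] at this
      have hjneg : (j:ℝ) < 0 := by exact_mod_cast hj0
      rw [hfneg j, hf]
      nlinarith
    · subst hj0; simp [hf]
    · have hk : (0:ℝ) < (j : ℝ) * Δ := by
        have : (0:ℝ) < (j:ℝ) := by exact_mod_cast hj0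
        nlinarith
      have hkN : (j : ℝ) * Δ ≤ (N : ℝ) * Δ := by
        have : (j:ℝ) ≤ (N:ℝ) := by exact_mod_cast hj.2
        nlinarith
      have := key ((j:ℝ) * Δ) hk hkN
      have hjpos : (0:ℝ) < (j:ℝ) := by exact_mod_cast hj0
      rw [hfneg j, hf]
      nlinarith
  have hNpos : 0 < f (N : ℤ) + f (-(N : ℤ)) := by
    have hk : (0:ℝ) < (N : ℝ) * Δ := by
      have : (0:ℝ) < (N:ℝ) := by exact_mod_cast hN
      nlinarith
    have := key ((N:ℝ) * Δ) hk le_rfl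
    have hNr : (0:ℝ) < (N:ℝ) := by exact_mod_cast hN
    have hfneg : f (-(N:ℤ)) = -(N : ℝ) * (10 : ℝ) ^ ((G * Real.cos (e - (N : ℝ) * Δ) ^ 2) / γ) := by
      simp only [hf]; push_cast; ring_nf
    rw [hfneg, hf]
    simp only
    push_cast
    nlinarith
  have h2S : 0 < ∑ j ∈ Finset.Icc (-(N : ℤ)) N, (f j + f (-j)) := by
    apply Finset.sum_pos' hpair
    exact ⟨(N : ℤ), Finset.mem_Icc.mpr ⟨by omega, le_rfl⟩, hNpos⟩
  rw [Finset.sum_add_distrib, ← hsum_neg] at h2S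
  linarith
end

section
/- Let f : ℝ → ℝ be continuous and satisfy |x + f(x)| < |x| for every x ≠ 0. Let e : ℕ → ℝ satisfy e(k+1) = e(k) + f(e(k)) for all k. Then e(k) → 0 as k → ∞. -/
/-- If f is continuous and |x + f(x)| < |x| for all x ≠ 0, then the iteration
e(k+1) = e(k) + f(e(k)) converges to 0. -/
theorem wca_error_tendsto_zero (f : ℝ → ℝ) (hf : Continuous f)
    (hcontract : ∀ x : ℝ, x ≠ 0 → |x + f x| < |x|)
    (e : ℕ → ℝ) (he : ∀ k : ℕ, e (k + 1) = e k + f (e k)) :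
    Filter.Tendsto e Filter.atTop (nhds 0) := by
  set g : ℝ → ℝ := fun x => x + f x with hgdef
  have hg : Continuous g := continuous_id.add hf
  -- g 0 = 0
  have g0 : g 0 = 0 := by
    have h1 : Filter.Tendsto (fun x => |g x|) (nhdsWithin 0 {(0:ℝ)}ᶜ) (nhds |g 0|) :=
      ((hg.abs.tendsto 0)).mono_left nhdsWithin_le_nhds
    have h2 : Filter.Tendsto (fun x : ℝ => |x|) (nhdsWithin 0 {(0:ℝ)}ᶜ) (nhds 0) := by
      have := (continuous_abs.tendsto (0:ℝ)).mono_left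
        (nhdsWithin_le_nhds (s := {(0:ℝ)}ᶜ))
      simpa using this
    have hev : ∀ᶠ x in nhdsWithin 0 {(0:ℝ)}ᶜ, |g x| ≤ |x| :=
      Filter.eventually_of_mem self_mem_nhdsWithin (fun x hx => (hcontract x hx).le)
    have hle : |g 0| ≤ 0 :=
      le_of_tendsto_of_tendsto h1 h2 hev
    exact abs_eq_zero.mp (le_antisymm hle (abs_nonneg _))
  have key : ∀ x : ℝ, |g x| ≤ |x| := by
    intro x
    rcases eq_or_ne x 0 with rfl | hx
    · simp [g0]
    · exact (hcontract x hx).le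
  have hestep : ∀ k, e (k + 1) = g (e k) := he
  set a : ℕ → ℝ := fun k => |e k| with hadef
  have hanti : Antitone a := by
    apply antitone_nat_of_succ_le
    intro k
    simpa [hadef, hestep k] using key (e k)
  have hbdd : BddBelow (Set.range a) :=
    ⟨0, by rintro _ ⟨k, rfl⟩; exact abs_nonneg _⟩
  set L : ℝ := ⨅ k, a k with hLdef
  have hla : Filter.Tendsto a Filter.atTop (nhds L) :=
    tendsto_atTop_ciInf hanti hbdd
  have hLnonneg : 0 ≤ L := le_ciInf fun k => abs_nonneg _
  have hLle : ∀ k, L ≤ a k := fun k => ciInf_le hbdd k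
  -- claim L = 0
  have hL0 : L = 0 := by
    by_contra hL
    have hLpos : 0 < L := lt_of_le_of_ne hLnonneg (Ne.symm hL)
    set S : Set ℝ := abs ⁻¹' Set.Icc L (a 0) with hSdef
    have hSclosed : IsClosed S := isClosed_Icc.preimage continuous_abs
    have hSsub : S ⊆ Set.Icc (-(a 0)) (a 0) := by
      intro x hx
      exact abs_le.mp hx.2
    have hScompact : IsCompact S :=
      (isCompact_Icc).of_isClosed_subset hSclosed hSsub
    have hSne : S.Nonempty := ⟨e 0, ⟨hLle 0, le_refl _⟩⟩
    obtain ⟨x0, hx0S, hx0max⟩ :=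
      hScompact.exists_isMaxOn hSne ((hg.abs.sub continuous_abs).continuousOn)
    have hx0ne : x0 ≠ 0 := by
      intro h
      have := hx0S.1
      rw [h] at this
      simp at this
      linarith
    have hneg : |g x0| - |x0| < 0 := sub_neg.mpr (hcontract x0 hx0ne)
    have hmem : ∀ k, e k ∈ S := fun k => ⟨hLle k, hanti (Nat.zero_le k)⟩
    have hdecr : ∀ k, a (k + 1) ≤ a k + (|g x0| - |x0|) := by
      intro k
      have h1 : |g (e k)| - |e k| ≤ |g x0| - |x0| := hx0max (hmem k)
      have : a (k + 1) = |g (e k)| := by simp [hadef, hestep k]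
      rw [this]
      linarith
    have hlim2 : Filter.Tendsto (fun k => a (k + 1)) Filter.atTop (nhds L) :=
      hla.comp (Filter.tendsto_add_atTop_nat 1)
    have hlim3 : Filter.Tendsto (fun k => a k + (|g x0| - |x0|)) Filter.atTop
        (nhds (L + (|g x0| - |x0|))) := hla.add_const _
    have : L ≤ L + (|g x0| - |x0|) :=
      le_of_tendsto_of_tendsto' hlim2 hlim3 hdecr
    linarith
  -- conclude
  have habs : Filter.Tendsto (fun k => |e k|) Filter.atTop (nhds 0) := by
    rw [← hL0]; exact hla
  exact tendsto_zero_iff_abs_tendsto_zero e |>.mpr habs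
end

section
/- Let N ≥ 1 be a natural number and let G > 0, γ > 0, Δ > 0 be real numbers. Let θ* (the actual direction of arrival) and θ_cen(k) (the current center angle) be real numbers with e = θ_cen(k) − θ* satisfying 0 < e and e + N·Δ ≤ π/2. Define the updated center angle θ_cen(k+1) = θ_cen(k) + Δ·(∑_{j=−N}^{N} j·10^{(G·(cos(e + jΔ))²)/γ}) / (∑_{j=−N}^{N} 10^{(G·(cos(e + jΔ))²)/γ}). Then θ_cen(k) − N·Δ ≤ θ_cen(k+1) < θ_cen(k). -/
lemma wca_cos_sq_lt {a b : ℝ} (hb : |b| < a) (ha : a ≤ Real.pi / 2) :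
    Real.cos a ^ 2 < Real.cos b ^ 2 := by
  have h1 : Real.cos (2 * a) < Real.cos |2 * b| := by
    apply Real.cos_lt_cos_of_nonneg_of_le_pi (abs_nonneg _) (by linarith)
    calc |2 * b| = 2 * |b| := by rw [abs_mul]; norm_num
      _ < 2 * a := by linarith
  rw [Real.cos_abs] at h1
  have h2 := Real.cos_sq a
  have h3 := Real.cos_sq b
  nlinarith

lemma wca_sum_bounds (N : ℕ) (hN : 1 ≤ N) (w : ℤ → ℝ)
    (hwpos : ∀ j, 0 < w j)
    (hkey : ∀ j : ℤ, 1 ≤ j → j ≤ (N : ℤ) → w j < w (-j)) :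
    -(N : ℝ) * (∑ j ∈ Finset.Icc (-(N : ℤ)) N, w j) ≤
      (∑ j ∈ Finset.Icc (-(N : ℤ)) N, (j : ℝ) * w j) ∧
    (∑ j ∈ Finset.Icc (-(N : ℤ)) N, (j : ℝ) * w j) < 0 := by
  set s := Finset.Icc (-(N : ℤ)) (N : ℤ) with hs
  set S := ∑ j ∈ s, (j : ℝ) * w j with hS
  constructor
  · rw [Finset.mul_sum]
    apply Finset.sum_le_sum
    intro i hi
    simp only [hs, Finset.mem_Icc] at hi
    have h1 : (-(N : ℝ)) ≤ (i : ℝ) := by exact_mod_cast hi.1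
    nlinarith [hwpos i]
  · have hrefl : S = ∑ j ∈ s, (-(j : ℝ)) * w (-j) := by
      rw [hS]
      apply Finset.sum_equiv (Equiv.neg ℤ)
      · intro i; simp only [hs, Finset.mem_Icc, Equiv.neg_apply]; omega
      · intro i _; simp [Equiv.neg_apply]
    have h2S : 2 * S = ∑ j ∈ s, (j : ℝ) * (w j - w (-j)) := by
      rw [two_mul]
      nth_rewrite 2 [hrefl]
      rw [← Finset.sum_add_distrib]
      apply Finset.sum_congr rfl
      intro i _; ring
    have hlt : ∑ j ∈ s, (j : ℝ) * (w j - w (-j)) < ∑ _j ∈ s, (0 : ℝ) := by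
      apply Finset.sum_lt_sum
      · intro i hi
        simp only [hs, Finset.mem_Icc] at hi
        rcases lt_trichotomy i 0 with h | h | h
        · have hk := hkey (-i) (by omega) (by omega)
          rw [neg_neg] at hk
          have hi' : (i : ℝ) < 0 := by exact_mod_cast h
          nlinarith
        · simp [h]
        · have hk := hkey i (by omega) hi.2
          have hi' : (0 : ℝ) < (i : ℝ) := by exact_mod_cast h
          nlinarith
      · refine ⟨(N : ℤ), by simp only [hs, Finset.mem_Icc]; omega, ?_⟩
        have hk := hkey (N : ℤ) (by exact_mod_cast hN) le_rfl
        have hN' : (0 : ℝ) < ((N : ℤ) : ℝ) := by exact_mod_cast hN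
        nlinarith
    rw [Finset.sum_const, smul_zero] at hlt
    linarith

/-- For positive pointing error e = θcen − θ* with the scan inside [−π/2, π/2],
the WCA update strictly decreases the center angle, moving it by at most
half the scanning range N·Δ. -/
theorem wca_update_moves_toward_doa (N : ℕ) (hN : 1 ≤ N) (G γ Δ : ℝ)
    (hG : 0 < G) (hγ : 0 < γ) (hΔ : 0 < Δ)
    (θstar θcen : ℝ) (e : ℝ) (he_def : e = θcen - θstar)
    (he : 0 < e) (hrange : e + (N : ℝ) * Δ ≤ Real.pi / 2)
    (θnext : ℝ)
    (hθnext : θnext = θcen + Δ *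
      (∑ j ∈ Finset.Icc (-(N : ℤ)) N,
          (j : ℝ) * (10 : ℝ) ^ ((G * Real.cos (e + (j : ℝ) * Δ) ^ 2) / γ)) /
      (∑ j ∈ Finset.Icc (-(N : ℤ)) N,
          (10 : ℝ) ^ ((G * Real.cos (e + (j : ℝ) * Δ) ^ 2) / γ))) :
    θcen - (N : ℝ) * Δ ≤ θnext ∧ θnext < θcen := by
  have hwpos : ∀ j : ℤ, 0 < (10 : ℝ) ^ ((G * Real.cos (e + (j : ℝ) * Δ) ^ 2) / γ) :=
    fun j => Real.rpow_pos_of_pos (by norm_num) _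
  have hkey : ∀ j : ℤ, 1 ≤ j → j ≤ (N : ℤ) →
      (10 : ℝ) ^ ((G * Real.cos (e + (j : ℝ) * Δ) ^ 2) / γ) <
      (10 : ℝ) ^ ((G * Real.cos (e + ((-j : ℤ) : ℝ) * Δ) ^ 2) / γ) := by
    intro j h1 h2
    have hj1 : (1 : ℝ) ≤ (j : ℝ) := by exact_mod_cast h1
    have hjN : (j : ℝ) ≤ (N : ℝ) := by exact_mod_cast h2
    have hjΔ : 0 < (j : ℝ) * Δ := by nlinarith
    have hjNΔ : (j : ℝ) * Δ ≤ (N : ℝ) * Δ := by nlinarith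
    have hcos : Real.cos (e + (j : ℝ) * Δ) ^ 2 <
        Real.cos (e + ((-j : ℤ) : ℝ) * Δ) ^ 2 := by
      push_cast
      have heq : e + -(j : ℝ) * Δ = e - (j : ℝ) * Δ := by ring
      rw [heq]
      apply wca_cos_sq_lt
      · rw [abs_lt]; constructor <;> nlinarith
      · linarith
    apply Real.rpow_lt_rpow_of_exponent_lt (by norm_num)
    gcongr
  obtain ⟨h1, h2⟩ := wca_sum_bounds N hN
    (fun j => (10 : ℝ) ^ ((G * Real.cos (e + (j : ℝ) * Δ) ^ 2) / γ))
    hwpos hkey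
  beta_reduce at h1 h2
  set S := ∑ j ∈ Finset.Icc (-(N : ℤ)) (N : ℤ),
      (j : ℝ) * (10 : ℝ) ^ ((G * Real.cos (e + (j : ℝ) * Δ) ^ 2) / γ) with hSdef
  set W := ∑ j ∈ Finset.Icc (-(N : ℤ)) (N : ℤ),
      (10 : ℝ) ^ ((G * Real.cos (e + (j : ℝ) * Δ) ^ 2) / γ) with hWdef
  have hWpos : 0 < W := by
    apply Finset.sum_pos (fun j _ => hwpos j)
    exact ⟨0, by simp⟩
  subst hθnext
  constructor
  · have h : -(N : ℝ) * Δ ≤ Δ * S / W := by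
      rw [le_div_iff₀ hWpos]; nlinarith
    linarith
  · have h : Δ * S / W < 0 := div_neg_of_neg_of_pos (by nlinarith) hWpos
    linarith
end
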